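/- Let M be a real symplectic 4×4 matrix with characteristic polynomial p. Then there exist real numbers b₀ and b₁ such that for every nonzero real number x, p(x) = x² · q(x + x⁻¹), where q(y) = y² + b₁·y + b₀. -/
import Mathlib


open Matrix Polynomial

set_option maxHeartbeats 1000000 in
private theorem my_det_fin_four {R : Type*} [CommRing R] (A : Matrix (Fin 4) (Fin 4) R) :
    A.det =
      A 0 0 * (A 1 1 * (A 2 2 * A 3 3 - A 2 3 * A 3 2) - A 1 2 * (A 2 1 * A 3 3 - A 2 3 * A 3 1) + A 1 3 * (A 2 1 * A 3 2 - A 2 2 * A 3 1))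
    - A 0 1 * (A 1 0 * (A 2 2 * A 3 3 - A 2 3 * A 3 2) - A 1 2 * (A 2 0 * A 3 3 - A 2 3 * A 3 0) + A 1 3 * (A 2 0 * A 3 2 - A 2 2 * A 3 0))
    + A 0 2 * (A 1 0 * (A 2 1 * A 3 3 - A 2 3 * A 3 1) - A 1 1 * (A 2 0 * A 3 3 - A 2 3 * A 3 0) + A 1 3 * (A 2 0 * A 3 1 - A 2 1 * A 3 0))
    - A 0 3 * (A 1 0 * (A 2 1 * A 3 2 - A 2 2 * A 3 1) - A 1 1 * (A 2 0 * A 3 2 - A 2 2 * A 3 0) + A 1 2 * (A 2 0 * A 3 1 - A 2 1 * A 3 0)) := by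
  rw [Matrix.det_succ_row_zero, Fin.sum_univ_four]
  simp [Matrix.det_fin_three, Fin.succAbove, Matrix.submatrix_apply, show (Fin.succ 2 : Fin 4) = 3 from rfl, show (Fin.succ 1 : Fin 4) = 2 from rfl, show (Fin.succ 0 : Fin 4) = 1 from rfl]
  norm_num [Fin.lt_def, Fin.castSucc, Fin.castAdd, Fin.castLE, show ((3 : Fin 4) : ℕ) = 3 from rfl, show ((2 : Fin 4) : ℕ) = 2 from rfl, show ((1 : Fin 4) : ℕ) = 1 from rfl, show (⟨2, by norm_num⟩ : Fin 4) = 2 from rfl]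
  ring

/-- For a real symplectic `4 × 4` matrix `M` with characteristic polynomial `p`, there are
real numbers `b₀, b₁` such that `p(x) = x² · q(x + x⁻¹)` for all nonzero real `x`, where
`q(y) = y² + b₁·y + b₀`. -/
theorem charpoly_symplectic_quadratic_factor (M : Matrix (Fin 2 ⊕ Fin 2) (Fin 2 ⊕ Fin 2) ℝ)
    (hM : Mᵀ * fromBlocks (0 : Matrix (Fin 2) (Fin 2) ℝ) 1 (-1) 0 * M =
      fromBlocks (0 : Matrix (Fin 2) (Fin 2) ℝ) 1 (-1) 0) :
    ∃ b₀ b₁ : ℝ, ∀ x : ℝ, x ≠ 0 →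
      M.charpoly.eval x = x ^ 2 * ((x + x⁻¹) ^ 2 + b₁ * (x + x⁻¹) + b₀) := by
  have hE01 : M (Sum.inl 0) (Sum.inl 0) * M (Sum.inr 0) (Sum.inl 1) + (-1) * M (Sum.inl 0) (Sum.inl 1) * M (Sum.inr 0) (Sum.inl 0) + M (Sum.inl 1) (Sum.inl 0) * M (Sum.inr 1) (Sum.inl 1) + (-1) * M (Sum.inl 1) (Sum.inl 1) * M (Sum.inr 1) (Sum.inl 0) = 0 := by
    have h := congrFun (congrFun hM (Sum.inl 0)) (Sum.inl 1)
    simp [Matrix.mul_apply, Fintype.sum_sum_type, Fin.sum_univ_two, Matrix.fromBlocks] at h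
    linear_combination h
  have hE02 : (-1) + M (Sum.inl 0) (Sum.inl 0) * M (Sum.inr 0) (Sum.inr 0) + (-1) * M (Sum.inl 0) (Sum.inr 0) * M (Sum.inr 0) (Sum.inl 0) + M (Sum.inl 1) (Sum.inl 0) * M (Sum.inr 1) (Sum.inr 0) + (-1) * M (Sum.inl 1) (Sum.inr 0) * M (Sum.inr 1) (Sum.inl 0) = 0 := by
    have h := congrFun (congrFun hM (Sum.inl 0)) (Sum.inr 0)
    simp [Matrix.mul_apply, Fintype.sum_sum_type, Fin.sum_univ_two, Matrix.fromBlocks] at h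
    linear_combination h
  have hE03 : M (Sum.inl 0) (Sum.inl 0) * M (Sum.inr 0) (Sum.inr 1) + (-1) * M (Sum.inl 0) (Sum.inr 1) * M (Sum.inr 0) (Sum.inl 0) + M (Sum.inl 1) (Sum.inl 0) * M (Sum.inr 1) (Sum.inr 1) + (-1) * M (Sum.inl 1) (Sum.inr 1) * M (Sum.inr 1) (Sum.inl 0) = 0 := by
    have h := congrFun (congrFun hM (Sum.inl 0)) (Sum.inr 1)
    simp [Matrix.mul_apply, Fintype.sum_sum_type, Fin.sum_univ_two, Matrix.fromBlocks] at h
    linear_combination h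
  have hE12 : M (Sum.inl 0) (Sum.inl 1) * M (Sum.inr 0) (Sum.inr 0) + (-1) * M (Sum.inl 0) (Sum.inr 0) * M (Sum.inr 0) (Sum.inl 1) + M (Sum.inl 1) (Sum.inl 1) * M (Sum.inr 1) (Sum.inr 0) + (-1) * M (Sum.inl 1) (Sum.inr 0) * M (Sum.inr 1) (Sum.inl 1) = 0 := by
    have h := congrFun (congrFun hM (Sum.inl 1)) (Sum.inr 0)
    simp [Matrix.mul_apply, Fintype.sum_sum_type, Fin.sum_univ_two, Matrix.fromBlocks] at h
    linear_combination h
  have hE13 : (-1) + M (Sum.inl 0) (Sum.inl 1) * M (Sum.inr 0) (Sum.inr 1) + (-1) * M (Sum.inl 0) (Sum.inr 1) * M (Sum.inr 0) (Sum.inl 1) + M (Sum.inl 1) (Sum.inl 1) * M (Sum.inr 1) (Sum.inr 1) + (-1) * M (Sum.inl 1) (Sum.inr 1) * M (Sum.inr 1) (Sum.inl 1) = 0 := by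
    have h := congrFun (congrFun hM (Sum.inl 1)) (Sum.inr 1)
    simp [Matrix.mul_apply, Fintype.sum_sum_type, Fin.sum_univ_two, Matrix.fromBlocks] at h
    linear_combination h
  have hE23 : M (Sum.inl 0) (Sum.inr 0) * M (Sum.inr 0) (Sum.inr 1) + (-1) * M (Sum.inl 0) (Sum.inr 1) * M (Sum.inr 0) (Sum.inr 0) + M (Sum.inl 1) (Sum.inr 0) * M (Sum.inr 1) (Sum.inr 1) + (-1) * M (Sum.inl 1) (Sum.inr 1) * M (Sum.inr 1) (Sum.inr 0) = 0 := by
    have h := congrFun (congrFun hM (Sum.inr 0)) (Sum.inr 1)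
    simp [Matrix.mul_apply, Fintype.sum_sum_type, Fin.sum_univ_two, Matrix.fromBlocks] at h
    linear_combination h
  refine ⟨(-2) + M (Sum.inl 0) (Sum.inl 0) * M (Sum.inl 1) (Sum.inl 1) + M (Sum.inl 0) (Sum.inl 0) * M (Sum.inr 0) (Sum.inr 0) + M (Sum.inl 0) (Sum.inl 0) * M (Sum.inr 1) (Sum.inr 1) + (-1) * M (Sum.inl 0) (Sum.inl 1) * M (Sum.inl 1) (Sum.inl 0) + (-1) * M (Sum.inl 0) (Sum.inr 0) * M (Sum.inr 0) (Sum.inl 0) + (-1) * M (Sum.inl 0) (Sum.inr 1) * M (Sum.inr 1) (Sum.inl 0) + M (Sum.inl 1) (Sum.inl 1) * M (Sum.inr 0) (Sum.inr 0) + M (Sum.inl 1) (Sum.inl 1) * M (Sum.inr 1) (Sum.inr 1) + (-1) * M (Sum.inl 1) (Sum.inr 0) * M (Sum.inr 0) (Sum.inl 1) + (-1) * M (Sum.inl 1) (Sum.inr 1) * M (Sum.inr 1) (Sum.inl 1) + M (Sum.inr 0) (Sum.inr 0) * M (Sum.inr 1) (Sum.inr 1) + (-1) * M (Sum.inr 0)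 (Sum.inr 1) * M (Sum.inr 1) (Sum.inr 0), (-1) * M (Sum.inl 0) (Sum.inl 0) + (-1) * M (Sum.inl 1) (Sum.inl 1) + (-1) * M (Sum.inr 0) (Sum.inr 0) + (-1) * M (Sum.inr 1) (Sum.inr 1), fun x hx => ?_⟩
  have hxx : x * x⁻¹ = 1 := mul_inv_cancel₀ hx
  have h1 : M.charpoly.eval x = ((charmatrix M).map (Polynomial.eval x)).det := by
    rw [Matrix.charpoly, eval_det]
    congr 1
    ext i j
    rw [matPolyEquiv_eval, Matrix.map_apply]
  have h2 : (charmatrix M).map (Polynomial.eval x) =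
      Matrix.of (fun i j => (if i = j then x else 0) - M i j) := by
    ext i j
    rcases eq_or_ne i j with rfl | hne
    · simp [charmatrix_apply_eq]
    · simp [charmatrix_apply_ne _ _ _ hne, hne]
  rw [h2, ← Matrix.det_reindex_self finSumFinEquiv, my_det_fin_four] at h1
  simp only [Matrix.reindex_apply, Matrix.submatrix_apply, Matrix.of_apply,
    show (finSumFinEquiv (m := 2) (n := 2)).symm (0 : Fin 4) = Sum.inl 0 by decide,
    show (finSumFinEquiv (m := 2) (n := 2)).symm (1 : Fin 4) = Sum.inl 1 by decide,
    show (finSumFinEquiv (m := 2) (n := 2)).symm (2 : Fin 4) = Sum.inr 0 by decide,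
    show (finSumFinEquiv (m := 2) (n := 2)).symm (3 : Fin 4) = Sum.inr 1 by decide,
    reduceCtorEq, Sum.inl.injEq, Sum.inr.injEq, if_true, if_false, ite_true, ite_false] at h1
  norm_num at h1
  have hP1 : (M (Sum.inl 0) (Sum.inl 0) * M (Sum.inr 0) (Sum.inl 1) + (-1) * M (Sum.inl 0) (Sum.inl 1) * M (Sum.inr 0) (Sum.inl 0) + M (Sum.inl 1) (Sum.inl 0) * M (Sum.inr 1) (Sum.inl 1) + (-1) * M (Sum.inl 1) (Sum.inl 1) * M (Sum.inr 1) (Sum.inl 0)) * (M (Sum.inl 0) (Sum.inr 0) * M (Sum.inr 0) (Sum.inr 1) + (-1) * M (Sum.inl 0) (Sum.inr 1) * M (Sum.inr 0) (Sum.inr 0) + M (Sum.inl 1) (Sum.inr 0) * M (Sum.inr 1) (Sum.inr 1) + (-1) * M (Sum.inl 1) (Sum.inr 1) * M (Sum.inr 1) (Sum.inr 0)) = 0 := by rw [hE01]; ring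
  have hP2 : ((-1) + M (Sum.inl 0) (Sum.inl 0) * M (Sum.inr 0) (Sum.inr 0) + (-1) * M (Sum.inl 0) (Sum.inr 0) * M (Sum.inr 0) (Sum.inl 0) + M (Sum.inl 1) (Sum.inl 0) * M (Sum.inr 1) (Sum.inr 0) + (-1) * M (Sum.inl 1) (Sum.inr 0) * M (Sum.inr 1) (Sum.inl 0)) * ((-1) + M (Sum.inl 0) (Sum.inl 1) * M (Sum.inr 0) (Sum.inr 1) + (-1) * M (Sum.inl 0) (Sum.inr 1) * M (Sum.inr 0) (Sum.inl 1) + M (Sum.inl 1) (Sum.inl 1) * M (Sum.inr 1) (Sum.inr 1) + (-1) * M (Sum.inl 1) (Sum.inr 1) * M (Sum.inr 1) (Sum.inl 1)) = 0 := by rw [hE02]; ring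
  have hP3 : (M (Sum.inl 0) (Sum.inl 0) * M (Sum.inr 0) (Sum.inr 1) + (-1) * M (Sum.inl 0) (Sum.inr 1) * M (Sum.inr 0) (Sum.inl 0) + M (Sum.inl 1) (Sum.inl 0) * M (Sum.inr 1) (Sum.inr 1) + (-1) * M (Sum.inl 1) (Sum.inr 1) * M (Sum.inr 1) (Sum.inl 0)) * (M (Sum.inl 0) (Sum.inl 1) * M (Sum.inr 0) (Sum.inr 0) + (-1) * M (Sum.inl 0) (Sum.inr 0) * M (Sum.inr 0) (Sum.inl 1) + M (Sum.inl 1) (Sum.inl 1) * M (Sum.inr 1) (Sum.inr 0) + (-1) * M (Sum.inl 1) (Sum.inr 0) * M (Sum.inr 1) (Sum.inl 1)) = 0 := by rw [hE03]; ring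
  rw [h1]
  set_option maxHeartbeats 4000000 in
  linear_combination (norm := ring1) x * ((-1) * M (Sum.inl 0) (Sum.inl 0) * M (Sum.inl 1) (Sum.inr 0) * M (Sum.inr 1) (Sum.inr 1) + M (Sum.inl 0) (Sum.inl 0) * M (Sum.inl 1) (Sum.inr 1) * M (Sum.inr 1) (Sum.inr 0) + M (Sum.inl 0) (Sum.inl 1) * M (Sum.inl 1) (Sum.inr 0) * M (Sum.inr 0) (Sum.inr 1) + (-1) * M (Sum.inl 0) (Sum.inl 1) * M (Sum.inl 1) (Sum.inr 1) * M (Sum.inr 0) (Sum.inr 0) + M (Sum.inl 0) (Sum.inr 0) * M (Sum.inl 1) (Sum.inl 0) * M (Sum.inr 1) (Sum.inr 1) + (-1) * M (Sum.inl 0) (Sum.inr 0) * M (Sum.inl 1) (Sum.inl 1) * M (Sum.inr 0) (Sum.inr 1) + M (Sum.inl 0) (Sum.inr 0) * M (Sum.inl 1) (Sum.inr 1) * M (Sum.inr 0) (Sum.inl 1) + (-1) * M (Sum.inl 0) (Sum.inr 0) * M (Sum.inl 1) (Sum.inr 1) * M (Sum.inr 1) (Sum.inl 0) + (-1) * M (Sum.inl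 0) (Sum.inr 1) * M (Sum.inl 1) (Sum.inl 0) * M (Sum.inr 1) (Sum.inr 0) + M (Sum.inl 0) (Sum.inr 1) * M (Sum.inl 1) (Sum.inl 1) * M (Sum.inr 0) (Sum.inr 0) + (-1) * M (Sum.inl 0) (Sum.inr 1) * M (Sum.inl 1) (Sum.inr 0) * M (Sum.inr 0) (Sum.inl 1) + M (Sum.inl 0) (Sum.inr 1) * M (Sum.inl 1) (Sum.inr 0) * M (Sum.inr 1) (Sum.inl 0)) * hE01 +
      x * (M (Sum.inl 0) (Sum.inl 0) * M (Sum.inl 1) (Sum.inl 1) * M (Sum.inr 1) (Sum.inr 1) + (-1) * M (Sum.inl 0) (Sum.inl 0) * M (Sum.inl 1) (Sum.inr 1) * M (Sum.inr 1) (Sum.inl 1) + (-1) * M (Sum.inl 0) (Sum.inl 1) * M (Sum.inl 1) (Sum.inl 0) * M (Sum.inr 1) (Sum.inr 1) + M (Sum.inl 0) (Sum.inl 1) * M (Sum.inl 1) (Sum.inr 1) * M (Sum.inr 1) (Sum.inl 0) + M (Sum.inl 0) (Sum.inr 1) * M (Sum.inl 1) (Sum.inl 0) * M (Sum.inr 1)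 (Sum.inl 1) + (-1) * M (Sum.inl 0) (Sum.inr 1) * M (Sum.inl 1) (Sum.inl 1) * M (Sum.inr 1) (Sum.inl 0) + M (Sum.inl 1) (Sum.inl 1) * M (Sum.inr 0) (Sum.inr 0) * M (Sum.inr 1) (Sum.inr 1) + (-1) * M (Sum.inl 1) (Sum.inl 1) * M (Sum.inr 0) (Sum.inr 1) * M (Sum.inr 1) (Sum.inr 0) + (-1) * M (Sum.inl 1) (Sum.inr 0) * M (Sum.inr 0) (Sum.inl 1) * M (Sum.inr 1) (Sum.inr 1) + M (Sum.inl 1) (Sum.inr 0) * M (Sum.inr 0) (Sum.inr 1) * M (Sum.inr 1) (Sum.inl 1) + M (Sum.inl 1) (Sum.inr 1) * M (Sum.inr 0) (Sum.inl 1) * M (Sum.inr 1) (Sum.inr 0) + (-1) * M (Sum.inl 1) (Sum.inr 1) * M (Sum.inr 0) (Sum.inr 0) * M (Sum.inr 1) (Sum.inl 1)) * hE02 +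
      x * ((-1) * M (Sum.inl 0) (Sum.inl 0) * M (Sum.inl 1) (Sum.inl 1) * M (Sum.inr 1) (Sum.inr 0) + M (Sum.inl 0) (Sum.inl 0) * M (Sum.inl 1) (Sum.inr 0) * M (Sum.inr 1) (Sum.inl 1) + M (Sum.inl 0) (Sum.inl 1) * M (Sum.inl 1) (Sum.inl 0) * M (Sum.inr 1) (Sum.inr 0) + (-1) * M (Sum.inl 0) (Sum.inl 1) * M (Sum.inl 1) (Sum.inr 0) * M (Sum.inr 1) (Sum.inl 0) + (-1) * M (Sum.inl 0) (Sum.inl 1) * M (Sum.inr 0) (Sum.inr 0) * M (Sum.inr 1) (Sum.inr 1) + M (Sum.inl 0) (Sum.inl 1) * M (Sum.inr 0) (Sum.inr 1) * M (Sum.inr 1) (Sum.inr 0) + (-1) * M (Sum.inl 0) (Sum.inr 0) * M (Sum.inl 1) (Sum.inl 0) * M (Sum.inr 1) (Sum.inl 1) + M (Sum.inl 0) (Sum.inr 0) * M (Sum.inl 1) (Sum.inl 1) * M (Sum.inr 1) (Sum.inl 0) + M (Sum.inl 0) (Sum.inr 0) * M (Sum.inr 0) (Sum.inl 1) * M (Sum.inr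 1) (Sum.inr 1) + (-1) * M (Sum.inl 0) (Sum.inr 0) * M (Sum.inr 0) (Sum.inr 1) * M (Sum.inr 1) (Sum.inl 1) + (-1) * M (Sum.inl 0) (Sum.inr 1) * M (Sum.inr 0) (Sum.inl 1) * M (Sum.inr 1) (Sum.inr 0) + M (Sum.inl 0) (Sum.inr 1) * M (Sum.inr 0) (Sum.inr 0) * M (Sum.inr 1) (Sum.inl 1)) * hE03 +
      x * ((-1) * M (Sum.inl 0) (Sum.inl 0) * M (Sum.inl 1) (Sum.inl 1) * M (Sum.inr 0) (Sum.inr 1) + M (Sum.inl 0) (Sum.inl 0) * M (Sum.inl 1) (Sum.inr 1) * M (Sum.inr 0) (Sum.inl 1) + M (Sum.inl 0) (Sum.inl 1) * M (Sum.inl 1) (Sum.inl 0) * M (Sum.inr 0) (Sum.inr 1) + (-1) * M (Sum.inl 0) (Sum.inl 1) * M (Sum.inl 1) (Sum.inr 1) * M (Sum.inr 0) (Sum.inl 0) + (-1) * M (Sum.inl 0) (Sum.inr 1) * M (Sum.inl 1) (Sum.inl 0) * M (Sum.inr 0) (Sum.inl 1) + M (Sum.inl 0) (Sum.inr 1) *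 M (Sum.inl 1) (Sum.inl 1) * M (Sum.inr 0) (Sum.inl 0) + (-1) * M (Sum.inl 1) (Sum.inl 0) * M (Sum.inr 0) (Sum.inr 0) * M (Sum.inr 1) (Sum.inr 1) + M (Sum.inl 1) (Sum.inl 0) * M (Sum.inr 0) (Sum.inr 1) * M (Sum.inr 1) (Sum.inr 0) + M (Sum.inl 1) (Sum.inr 0) * M (Sum.inr 0) (Sum.inl 0) * M (Sum.inr 1) (Sum.inr 1) + (-1) * M (Sum.inl 1) (Sum.inr 0) * M (Sum.inr 0) (Sum.inr 1) * M (Sum.inr 1) (Sum.inl 0) + (-1) * M (Sum.inl 1) (Sum.inr 1) * M (Sum.inr 0) (Sum.inl 0) * M (Sum.inr 1) (Sum.inr 0) + M (Sum.inl 1) (Sum.inr 1) * M (Sum.inr 0) (Sum.inr 0) * M (Sum.inr 1) (Sum.inl 0)) * hE12 +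
      x * (M (Sum.inl 0) (Sum.inl 0) * M (Sum.inl 1) (Sum.inl 1) * M (Sum.inr 0) (Sum.inr 0) + (-1) * M (Sum.inl 0) (Sum.inl 0) * M (Sum.inl 1) (Sum.inr 0) * M (Sum.inr 0) (Sum.inl 1) + M (Sum.inl 0) (Sum.inl 0) * M (Sum.inr 0) (Sum.inr 0) * M (Sum.inr 1) (Sum.inr 1) + (-1) * M (Sum.inl 0) (Sum.inl 0) * M (Sum.inr 0) (Sum.inr 1) * M (Sum.inr 1) (Sum.inr 0) + (-1) * M (Sum.inl 0) (Sum.inl 1) * M (Sum.inl 1) (Sum.inl 0) * M (Sum.inr 0) (Sum.inr 0) + M (Sum.inl 0) (Sum.inl 1) * M (Sum.inl 1) (Sum.inr 0) * M (Sum.inr 0) (Sum.inl 0) + M (Sum.inl 0) (Sum.inr 0) * M (Sum.inl 1) (Sum.inl 0) * M (Sum.inr 0) (Sum.inl 1) + (-1) * M (Sum.inl 0) (Sum.inr 0) * M (Sum.inl 1) (Sum.inl 1) * M (Sum.inr 0) (Sum.inl 0) + (-1) * M (Sum.inl 0) (Sum.inr 0) * M (Sum.inr 0) (Sum.inl 0)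 * M (Sum.inr 1) (Sum.inr 1) + M (Sum.inl 0) (Sum.inr 0) * M (Sum.inr 0) (Sum.inr 1) * M (Sum.inr 1) (Sum.inl 0) + M (Sum.inl 0) (Sum.inr 1) * M (Sum.inr 0) (Sum.inl 0) * M (Sum.inr 1) (Sum.inr 0) + (-1) * M (Sum.inl 0) (Sum.inr 1) * M (Sum.inr 0) (Sum.inr 0) * M (Sum.inr 1) (Sum.inl 0)) * hE13 +
      x * ((-1) * M (Sum.inl 0) (Sum.inl 0) * M (Sum.inr 0) (Sum.inl 1) * M (Sum.inr 1) (Sum.inr 1) + M (Sum.inl 0) (Sum.inl 0) * M (Sum.inr 0) (Sum.inr 1) * M (Sum.inr 1) (Sum.inl 1) + M (Sum.inl 0) (Sum.inl 1) * M (Sum.inr 0) (Sum.inl 0) * M (Sum.inr 1) (Sum.inr 1) + (-1) * M (Sum.inl 0) (Sum.inl 1) * M (Sum.inr 0) (Sum.inr 1) * M (Sum.inr 1) (Sum.inl 0) + (-1) * M (Sum.inl 0) (Sum.inr 1) * M (Sum.inr 0) (Sum.inl 0) * M (Sum.inr 1) (Sum.inl 1) + M (Sum.inl 0) (Sum.inr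 1) * M (Sum.inr 0) (Sum.inl 1) * M (Sum.inr 1) (Sum.inl 0) + M (Sum.inl 1) (Sum.inl 0) * M (Sum.inr 0) (Sum.inl 1) * M (Sum.inr 1) (Sum.inr 0) + (-1) * M (Sum.inl 1) (Sum.inl 0) * M (Sum.inr 0) (Sum.inr 0) * M (Sum.inr 1) (Sum.inl 1) + (-1) * M (Sum.inl 1) (Sum.inl 1) * M (Sum.inr 0) (Sum.inl 0) * M (Sum.inr 1) (Sum.inr 0) + M (Sum.inl 1) (Sum.inl 1) * M (Sum.inr 0) (Sum.inr 0) * M (Sum.inr 1) (Sum.inl 0) + M (Sum.inl 1) (Sum.inr 0) * M (Sum.inr 0) (Sum.inl 0) * M (Sum.inr 1) (Sum.inl 1) + (-1) * M (Sum.inl 1) (Sum.inr 0) * M (Sum.inr 0) (Sum.inl 1) * M (Sum.inr 1) (Sum.inl 0)) * hE23 +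
      (1 - x * (M (Sum.inl 0) (Sum.inl 0) + M (Sum.inl 1) (Sum.inl 1) + M (Sum.inr 0) (Sum.inr 0) + M (Sum.inr 1) (Sum.inr 1))) * (-hP1 + hP2 - hP3 + hE02 + hE13) +
      ((-1) + M (Sum.inl 0) (Sum.inl 0) * x + M (Sum.inl 1) (Sum.inl 1) * x + M (Sum.inr 0) (Sum.inr 0) * x + M (Sum.inr 1) (Sum.inr 1) * x + (-1) * x * x⁻¹ + (-2) * x * x) * hxx
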